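/- (Mellin-transform representation of the Euler q-zeta function, Eq. (39).) Suppose in addition 0 < q < 1. Let h ≥ 1 be an integer, x > 0 a real number, and s a complex number with Re(s) > 0. Then the integral ∫_{0}^{∞} t^{s−1} · (1+q) · (Σ_{n=0}^{∞} (−1)^n q^{hn} exp(−[n+x]_q · t)) dt converges and equals Γ(s) · ζ_{E,q}^{h}(s,x), where ζ_{E,q}^{h}(s,x) := (1+q) · Σ_{n=0}^{∞} (−1)^n q^{nh} · [n+x]_q^{−s} is an absolutely convergent series, [n+x]_q^{−s} := exp(−s · log [n+x]_q) (note [n+x]_q > 0 since x > 0), and Γ is the complex Gamma function. -/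

import Mathlib

open Finset

/-- The q-number `[x]_q = (1 - q^x)/(1 - q)`, with `q^x = exp (x * log q)` (rpow). -/
noncomputable def qNum (q x : ℝ) : ℝ := (1 - q ^ x) / (1 - q)

/-- `[l]_{-q} = (1 - (-q)^l)/(1 + q)` for a natural number `l`. -/
noncomputable def qNumNeg (q : ℝ) (l : ℕ) : ℝ := (1 - (-q) ^ l) / (1 + q)

/-- The higher-order q-Euler polynomial
`E_{m,q}^{(h,k)}(x) = ((1+q)^k/(1-q)^m) * Σ_{j=0}^m C(m,j) (-1)^j q^{jx} / Π_{i=0}^{k-1} (1 + q^{h+j-i})`. -/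
noncomputable def qE (q : ℝ) (h : ℤ) (k m : ℕ) (x : ℝ) : ℝ :=
  ((1 + q) ^ k / (1 - q) ^ m) *
    ∑ j ∈ Finset.range (m + 1),
      (m.choose j : ℝ) * (-1) ^ j * q ^ ((j : ℝ) * x) /
        ∏ i ∈ Finset.range k, (1 + q ^ ((h : ℝ) + (j : ℝ) - (i : ℝ)))

/-! Each term `aₙ e^{-pₙ t}` has Mellin transform `Γ(s) aₙ pₙ^{-s}`. The exponents
`pₙ = [n + x]_q` are bounded below by `[x]_q > 0` and the coefficients `(-1)ⁿ q^{nh}` are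
dominated by `qⁿ`, so the series is bounded by `C e^{-[x]_q t}`: this makes the Mellin integral
converge and justifies integrating term by term. -/

open Set Filter Topology Complex

section DirichletMellin

variable {ι : Type*} {a : ι → ℂ} {p : ι → ℝ} {c : ℝ}

lemma norm_mul_exp_neg_mul_le (hp : ∀ i, c ≤ p i) (i : ι) {t : ℝ} (ht : 0 ≤ t) :
    ‖a i * Real.exp (-p i * t)‖ ≤ ‖a i‖ * Real.exp (-c * t) := by
  rw [norm_mul, norm_real, Real.norm_of_nonneg (Real.exp_pos _).le]
  gcongr
  exact hp i

lemma summable_mul_exp_neg_mul (ha : Summable (‖a ·‖)) (hp : ∀ i, c ≤ p i) {t : ℝ}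
    (ht : 0 ≤ t) : Summable fun i ↦ a i * Real.exp (-p i * t) :=
  (ha.mul_right (Real.exp (-c * t))).of_norm_bounded fun i ↦ norm_mul_exp_neg_mul_le hp i ht

lemma norm_tsum_mul_exp_neg_mul_le (ha : Summable (‖a ·‖)) (hp : ∀ i, c ≤ p i) {t : ℝ}
    (ht : 0 ≤ t) :
    ‖∑' i, a i * Real.exp (-p i * t)‖ ≤ (∑' i, ‖a i‖) * Real.exp (-c * t) := by
  rw [← tsum_mul_right]
  exact tsum_of_norm_bounded (ha.mul_right _).hasSum fun i ↦ norm_mul_exp_neg_mul_le hp i ht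

lemma continuousOn_tsum_mul_exp_neg_mul (ha : Summable (‖a ·‖)) (hp : ∀ i, 0 ≤ p i) :
    ContinuousOn (fun t ↦ ∑' i, a i * Real.exp (-p i * t)) (Ici 0) := by
  refine continuousOn_tsum (fun i ↦ by fun_prop) ha fun i t (ht : 0 ≤ t) ↦ ?_
  simpa using norm_mul_exp_neg_mul_le hp i ht

lemma mellinConvergent_tsum_mul_exp_neg_mul (ha : Summable (‖a ·‖)) (hc : 0 < c)
    (hp : ∀ i, c ≤ p i) {s : ℂ} (hs : 0 < s.re) :
    MellinConvergent (fun t ↦ ∑' i, a i * Real.exp (-p i * t)) s := by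
  refine mellinConvergent_of_isBigO_rpow_exp (b := 0) hc ?_ ?_ ?_ hs
  · exact ((continuousOn_tsum_mul_exp_neg_mul ha fun i ↦ hc.le.trans (hp i)).mono
      Ioi_subset_Ici_self).locallyIntegrableOn measurableSet_Ioi
  · refine Asymptotics.IsBigO.of_bound (∑' i, ‖a i‖) ?_
    filter_upwards [eventually_ge_atTop 0] with t ht
    simpa [Real.norm_of_nonneg (Real.exp_pos _).le] using norm_tsum_mul_exp_neg_mul_le ha hp ht
  · refine Asymptotics.IsBigO.of_bound (∑' i, ‖a i‖) ?_
    filter_upwards [self_mem_nhdsWithin] with t (ht : 0 < t)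
    calc ‖∑' i, a i * Real.exp (-p i * t)‖ ≤ (∑' i, ‖a i‖) * Real.exp (-c * t) :=
          norm_tsum_mul_exp_neg_mul_le ha hp ht.le
      _ ≤ (∑' i, ‖a i‖) * ‖t ^ (-(0 : ℝ))‖ := by
          gcongr
          simp only [neg_zero, Real.rpow_zero, norm_one, Real.exp_le_one_iff]
          nlinarith

lemma summable_norm_div_rpow (ha : Summable (‖a ·‖)) (hc : 0 < c) (hp : ∀ i, c ≤ p i)
    {σ : ℝ} (hσ : 0 ≤ σ) : Summable fun i ↦ ‖a i‖ / p i ^ σ := by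
  refine (ha.div_const (c ^ σ)).of_nonneg_of_le (fun i ↦ ?_) fun i ↦ ?_
  · have := hc.trans_le (hp i)
    positivity
  · gcongr
    exact hp i

lemma hasSum_mellin_tsum_mul_exp_neg_mul [Countable ι] (ha : Summable (‖a ·‖)) (hc : 0 < c)
    (hp : ∀ i, c ≤ p i) {s : ℂ} (hs : 0 < s.re) :
    HasSum (fun i ↦ Gamma s * a i / p i ^ s)
      (mellin (fun t ↦ ∑' i, a i * Real.exp (-p i * t)) s) :=
  hasSum_mellin (fun i ↦ .inr (hc.trans_le (hp i))) hs
    (fun _ ht ↦ (summable_mul_exp_neg_mul ha hp (le_of_lt ht)).hasSum)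
    (summable_norm_div_rpow ha hc hp hs.le)

end DirichletMellin

lemma div_ofReal_cpow_eq_mul_exp {p : ℝ} (hp : 0 < p) (z s : ℂ) :
    z / (p : ℂ) ^ s = z * exp (-s * (Real.log p : ℂ)) := by
  rw [cpow_def_of_ne_zero (ofReal_ne_zero.mpr hp.ne'), ← ofReal_log hp.le, div_eq_mul_inv,
    ← exp_neg, neg_mul, mul_comm s]

section QNumber

variable {q : ℝ}

lemma qNum_pos (hq0 : 0 < q) (hq1 : q < 1) {x : ℝ} (hx : 0 < x) : 0 < qNum q x :=
  div_pos (sub_pos.mpr (Real.rpow_lt_one hq0.le hq1 hx)) (sub_pos.mpr hq1)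

lemma qNum_le_qNum (hq0 : 0 < q) (hq1 : q < 1) {x y : ℝ} (hxy : x ≤ y) :
    qNum q x ≤ qNum q y := by
  have : q ^ y ≤ q ^ x := Real.rpow_le_rpow_of_exponent_ge hq0 hq1.le hxy
  unfold qNum
  gcongr

lemma norm_neg_one_pow_mul_zpow_le (hq0 : 0 < q) (hq1 : q ≤ 1) {h : ℤ} (hh : 1 ≤ h) (n : ℕ) :
    ‖(-1 : ℂ) ^ n * (q : ℂ) ^ ((n : ℤ) * h)‖ ≤ q ^ n := by
  rw [norm_mul, norm_pow, norm_neg, norm_one, one_pow, one_mul, norm_zpow, norm_real,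
    Real.norm_of_nonneg hq0.le, ← zpow_natCast]
  exact zpow_le_zpow_right_of_le_one₀ hq0 hq1 (le_mul_of_one_le_right n.cast_nonneg hh)

end QNumber

theorem stmt_19 (q : ℝ) (hq0 : 0 < q) (hq1 : q < 1) (h : ℤ) (hh : 1 ≤ h)
    (x : ℝ) (hx : 0 < x) (s : ℂ) (hs : 0 < s.re) :
    Summable (fun n : ℕ =>
        ‖(-1 : ℂ) ^ n * (q : ℂ) ^ ((n : ℤ) * h) *
          Complex.exp (-s * (Real.log (qNum q ((n : ℝ) + x)) : ℂ))‖) ∧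
      MeasureTheory.IntegrableOn
        (fun t : ℝ =>
          (t : ℂ) ^ (s - 1) * ((1 + q : ℝ) : ℂ) *
            ((∑' n : ℕ, (-1 : ℝ) ^ n * q ^ ((n : ℤ) * h) *
                Real.exp (-(qNum q ((n : ℝ) + x)) * t) : ℝ) : ℂ))
        (Set.Ioi 0) ∧
      (∫ t in Set.Ioi (0 : ℝ),
          (t : ℂ) ^ (s - 1) * ((1 + q : ℝ) : ℂ) *
            ((∑' n : ℕ, (-1 : ℝ) ^ n * q ^ ((n : ℤ) * h) *
                Real.exp (-(qNum q ((n : ℝ) + x)) * t) : ℝ) : ℂ))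
        = Complex.Gamma s *
            (((1 + q : ℝ) : ℂ) *
              ∑' n : ℕ, (-1 : ℂ) ^ n * (q : ℂ) ^ ((n : ℤ) * h) *
                Complex.exp (-s * (Real.log (qNum q ((n : ℝ) + x)) : ℂ))) := by
  set a : ℕ → ℂ := fun n ↦ (-1 : ℂ) ^ n * (q : ℂ) ^ ((n : ℤ) * h)
  set p : ℕ → ℝ := fun n ↦ qNum q ((n : ℝ) + x)
  have ha : Summable (‖a ·‖) :=
    (summable_geometric_of_lt_one hq0.le hq1).of_nonneg_of_le (fun _ ↦ norm_nonneg _)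
      (norm_neg_one_pow_mul_zpow_le hq0 hq1.le hh)
  have hc : 0 < qNum q x := qNum_pos hq0 hq1 hx
  have hp : ∀ n, qNum q x ≤ p n :=
    fun n ↦ qNum_le_qNum hq0 hq1 (le_add_of_nonneg_left n.cast_nonneg)
  have hF : ∀ t : ℝ, (((∑' n : ℕ, (-1 : ℝ) ^ n * q ^ ((n : ℤ) * h) *
      Real.exp (-(qNum q ((n : ℝ) + x)) * t) : ℝ) : ℂ)) = ∑' n, a n * Real.exp (-p n * t) := by
    intro t
    rw [ofReal_tsum]
    push_cast
    rfl
  have hterm (n : ℕ) : (-1 : ℂ) ^ n * (q : ℂ) ^ ((n : ℤ) * h) *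
      exp (-s * (Real.log (qNum q ((n : ℝ) + x)) : ℂ)) = a n / (p n : ℂ) ^ s :=
    (div_ofReal_cpow_eq_mul_exp (hc.trans_le (hp n)) _ _).symm
  have hmellin := hasSum_mellin_tsum_mul_exp_neg_mul ha hc hp hs
  simp only [hF, hterm]
  refine ⟨?_, ?_, ?_⟩
  · refine (summable_norm_div_rpow ha hc hp hs.le).congr fun n ↦ ?_
    rw [norm_div, norm_cpow_eq_rpow_re_of_pos (hc.trans_le (hp n))]
  · refine MeasureTheory.IntegrableOn.congr_fun
      ((mellinConvergent_tsum_mul_exp_neg_mul ha hc hp hs).const_mul ((1 + q : ℝ) : ℂ))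
      (fun t _ ↦ ?_) measurableSet_Ioi
    rw [smul_eq_mul]
    ring
  · calc _ = ((1 + q : ℝ) : ℂ) * mellin (fun t ↦ ∑' n, a n * Real.exp (-p n * t)) s := by
          rw [mellin, ← MeasureTheory.integral_const_mul]
          congr 1 with t
          rw [smul_eq_mul]
          ring
      _ = _ := by
          rw [← hmellin.tsum_eq]
          simp_rw [mul_div_assoc]
          rw [tsum_mul_left]
          ring
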